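/- arXiv:1108.2092 — 11 statements merged into one kernel-verified Lean document; each statement's English description precedes it below -/
import Mathlib

section
/- If a finite game is not strict (i.e., some player has two distinct strategies yielding equal utility against some fixed profile of the other players), then some subgame of the game has at least two pure Nash equilibria; hence every uniquely subgame stable game is strict. -/
section Defs

variable {n : ℕ} {S : Fin n → Type*}

/-- A better-response transition: `s'` differs from `s` only in player `i`'s
strategy, which strictly improves `i`'s utility. -/
def IsBetter (u : ∀ i : Fin n, (∀ j, S j) → ℝ) (s s' : ∀ j, S j) : Prop :=
  ∃ i, s' = Function.update s i (s' i) ∧ s' i ≠ s i ∧ u i s < u i s'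

/-- A best-response transition: additionally the new strategy maximizes
`i`'s utility against the others' strategies. -/
def IsBest (u : ∀ i : Fin n, (∀ j, S j) → ℝ) (s s' : ∀ j, S j) : Prop :=
  ∃ i, s' = Function.update s i (s' i) ∧ s' i ≠ s i ∧ u i s < u i s' ∧
    ∀ t : S i, u i (Function.update s i t) ≤ u i s'

/-- Pure Nash equilibrium. -/
def IsNash (u : ∀ i : Fin n, (∀ j, S j) → ℝ) (s : ∀ j, S j) : Prop :=
  ∀ i, ∀ t : S i, u i (Function.update s i t) ≤ u i s

/-- Weak acyclicity (under better response). -/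
def WeaklyAcyclic (u : ∀ i : Fin n, (∀ j, S j) → ℝ) : Prop :=
  ∀ s, ∃ e, Relation.ReflTransGen (IsBetter u) s e ∧ IsNash u e

/-- Weak acyclicity under best response. -/
def WeaklyAcyclicBest (u : ∀ i : Fin n, (∀ j, S j) → ℝ) : Prop :=
  ∀ s, ∃ e, Relation.ReflTransGen (IsBest u) s e ∧ IsNash u e

/-- Membership of a profile in the subgame given by strategy sets `T`. -/
def InSub (T : ∀ i, Set (S i)) (s : ∀ j, S j) : Prop := ∀ i, s i ∈ T i

/-- Pure Nash equilibrium of the subgame given by `T`. -/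
def IsNashOn (u : ∀ i : Fin n, (∀ j, S j) → ℝ) (T : ∀ i, Set (S i)) (s : ∀ j, S j) : Prop :=
  InSub T s ∧ ∀ i, ∀ t ∈ T i, u i (Function.update s i t) ≤ u i s

/-- Best-response transition within the subgame given by `T`. -/
def IsBestOn (u : ∀ i : Fin n, (∀ j, S j) → ℝ) (T : ∀ i, Set (S i)) (s s' : ∀ j, S j) : Prop :=
  InSub T s ∧ InSub T s' ∧ ∃ i, s' = Function.update s i (s' i) ∧ s' i ≠ s i ∧
    u i s < u i s' ∧ ∀ t ∈ T i, u i (Function.update s i t) ≤ u i s'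

/-- Subgame stability: every subgame has a pure Nash equilibrium. -/
def SubgameStable (u : ∀ i : Fin n, (∀ j, S j) → ℝ) : Prop :=
  ∀ T : ∀ i, Set (S i), (∀ i, (T i).Nonempty) → ∃ s, IsNashOn u T s

/-- Unique subgame stability: every subgame has exactly one pure Nash equilibrium. -/
def USS (u : ∀ i : Fin n, (∀ j, S j) → ℝ) : Prop :=
  ∀ T : ∀ i, Set (S i), (∀ i, (T i).Nonempty) → ∃! s, IsNashOn u T s

/-- Strict game: no player is indifferent between two of its own strategies
against a fixed profile of the others. -/
def StrictGame (u : ∀ i : Fin n, (∀ j, S j) → ℝ) : Prop :=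
  ∀ i (s : ∀ j, S j) (t : S i), t ≠ s i → u i (Function.update s i t) ≠ u i s

/-- Reachability by best-response improvement paths. -/
def BRReach (u : ∀ i : Fin n, (∀ j, S j) → ℝ) (s t : ∀ j, S j) : Prop :=
  Relation.ReflTransGen (IsBest u) s t

/-- The (strategy sets of the) subgame spanned by `BR_Γ(s)`. -/
def SpanBR (u : ∀ i : Fin n, (∀ j, S j) → ℝ) (s : ∀ j, S j) : ∀ i, Set (S i) :=
  fun i => {x | ∃ t, BRReach u s t ∧ t i = x}

/-- A sink of the best-response dynamics: a nonempty set of profiles closed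
under best-response transitions and strongly connected. -/
def IsSinkBest (u : ∀ i : Fin n, (∀ j, S j) → ℝ) (X : Set (∀ j, S j)) : Prop :=
  X.Nonempty ∧ (∀ s ∈ X, ∀ s', IsBest u s s' → s' ∈ X) ∧
    ∀ s ∈ X, ∀ s' ∈ X, Relation.ReflTransGen (IsBest u) s s'

end Defs

theorem stmt1 {n : ℕ} {S : Fin n → Type*} [∀ i, Fintype (S i)] [∀ i, Nonempty (S i)]
    (u : ∀ i : Fin n, (∀ j, S j) → ℝ) :
    (¬ StrictGame u → ∃ T : ∀ i, Set (S i), (∀ i, (T i).Nonempty) ∧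
      ∃ s s' : ∀ j, S j, s ≠ s' ∧ IsNashOn u T s ∧ IsNashOn u T s') ∧
    (USS u → StrictGame u) := by
  have main : ¬ StrictGame u → ∃ T : ∀ i, Set (S i), (∀ i, (T i).Nonempty) ∧
      ∃ s s' : ∀ j, S j, s ≠ s' ∧ IsNashOn u T s ∧ IsNashOn u T s' := by
    intro h
    simp only [StrictGame, not_forall] at h
    obtain ⟨i, s, t, hne, heq⟩ := h
    rw [not_not] at heq
    refine ⟨Function.update (fun j => ({s j} : Set (S j))) i {s i, t}, ?_, s,
      Function.update s i t, ?_, ?_, ?_⟩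
    · intro j
      by_cases hj : j = i
      · subst hj; rw [Function.update_self]; exact ⟨s j, Or.inl rfl⟩
      · rw [Function.update_of_ne hj]; exact ⟨s j, rfl⟩
    · intro hcon
      apply hne
      have := congrFun hcon i
      rw [Function.update_self] at this
      exact this.symm
    · constructor
      · intro j
        by_cases hj : j = i
        · subst hj; rw [Function.update_self]; exact Or.inl rfl
        · rw [Function.update_of_ne hj]; rfl
      · intro j x hx
        by_cases hj : j = i
        · subst hj
          rw [Function.update_self] at hx
          rcases hx with hx | hx
          · rw [hx, Function.update_eq_self]
          · rw [Set.mem_singleton_iff] at hx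
            rw [hx, heq]
        · simp only [Function.update_of_ne hj, Set.mem_singleton_iff] at hx
          rw [hx, Function.update_eq_self]
    · constructor
      · intro j
        by_cases hj : j = i
        · subst hj; rw [Function.update_self, Function.update_self]; exact Or.inr rfl
        · rw [Function.update_of_ne hj, Function.update_of_ne hj]; rfl
      · intro j x hx
        by_cases hj : j = i
        · subst hj
          rw [Function.update_self] at hx
          rw [Function.update_idem]
          rcases hx with hx | hx
          · rw [hx, Function.update_eq_self, ← heq]
          · rw [Set.mem_singleton_iff] at hx
            rw [hx]
        · simp only [Function.update_of_ne hj, Set.mem_singleton_iff] at hx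
          have : Function.update (Function.update s i t) j x = Function.update s i t := by
            rw [hx, ← Function.update_of_ne hj t s, Function.update_eq_self]
          rw [this]
  refine ⟨main, ?_⟩
  intro hUSS
  by_contra h
  obtain ⟨T, hTne, s, s', hss, hs, hs'⟩ := main h
  obtain ⟨w, _, huniq⟩ := hUSS T hTne
  exact hss ((huniq s hs).trans (huniq s' hs').symm)
end

section
/- Let Γ be a finite game, s a strategy profile, and Γ' the subgame of Γ spanned by the set BR_Γ(s) of profiles reachable from s via best-response improvement paths in Γ. Then any best-response improvement path in Γ' starting at s is also a best-response improvement path in Γ. -/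
lemma step_of_reach {n : ℕ} {S : Fin n → Type*} [∀ i, Fintype (S i)] [∀ i, Nonempty (S i)]
    (u : ∀ i : Fin n, (∀ j, S j) → ℝ) (s b c : ∀ j, S j)
    (hb : BRReach u s b) (hstep : IsBestOn u (SpanBR u s) b c) : IsBest u b c := by
  obtain ⟨-, -, i, heq, hne, hlt, hmax⟩ := hstep
  obtain ⟨x, hx⟩ := Finite.exists_max (fun x : S i => u i (Function.update b i x))
  have hct : u i c ≤ u i (Function.update b i x) := by
    have := hx (c i); rwa [← heq] at this
  have hbx : u i b < u i (Function.update b i x) := lt_of_lt_of_le hlt hct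
  have hxne : x ≠ b i := by
    intro hxb
    rw [hxb, Function.update_eq_self] at hbx
    exact lt_irrefl _ hbx
  have hbest : IsBest u b (Function.update b i x) := by
    refine ⟨i, ?_, ?_, ?_, ?_⟩
    · rw [Function.update_self]
    · rw [Function.update_self]; exact hxne
    · exact hbx
    · intro t'; exact hx t'
  have hxmem : x ∈ SpanBR u s i :=
    ⟨Function.update b i x, hb.tail hbest, Function.update_self _ _ _⟩
  have hle : u i (Function.update b i x) ≤ u i c := hmax x hxmem
  exact ⟨i, heq, hne, hlt, fun t' => le_trans (hx t') hle⟩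

theorem stmt3 {n : ℕ} {S : Fin n → Type*} [∀ i, Fintype (S i)] [∀ i, Nonempty (S i)]
    (u : ∀ i : Fin n, (∀ j, S j) → ℝ) (s t : ∀ j, S j)
    (h : Relation.ReflTransGen (IsBestOn u (SpanBR u s)) s t) :
    Relation.ReflTransGen (IsBest u) s t := by
  induction h with
  | refl => exact .refl
  | tail _ hstep ih => exact ih.tail (step_of_reach u s _ _ ih hstep)
end

section
/- Every finite game Γ in which every subgame has a unique pure Nash equilibrium is weakly acyclic under best response: from every strategy profile there is a best-response improvement path ending at the (unique) pure Nash equilibrium of Γ. -/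
section Proof

open Relation Function

variable {n : ℕ}

/-- Coerce a profile of the subgame `T` to a profile of the full game. -/
def coeProf {S : Fin n → Type*} (T : ∀ i, Set (S i)) (s : ∀ j, ↥(T j)) : ∀ j, S j :=
  fun j => (s j : S j)

lemma coe_update {S : Fin n → Type*} (T : ∀ i, Set (S i)) (s : ∀ j, ↥(T j)) (i : Fin n)
    (x : ↥(T i)) :
    coeProf T (Function.update s i x) = Function.update (coeProf T s) i (x : S i) := by
  funext j
  rcases eq_or_ne j i with rfl | hj
  · simp [coeProf]
  · simp [coeProf, Function.update_of_ne hj]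

/-- Utilities of the subgame `T`. -/
def subU {S : Fin n → Type*} (u : ∀ i : Fin n, (∀ j, S j) → ℝ) (T : ∀ i, Set (S i)) :
    ∀ i : Fin n, (∀ j, ↥(T j)) → ℝ := fun i s => u i (coeProf T s)

lemma nashOn_sub_iff {S : Fin n → Type*} (u : ∀ i : Fin n, (∀ j, S j) → ℝ)
    (T : ∀ i, Set (S i)) (T' : ∀ i, Set (↥(T i))) (ss : ∀ j, ↥(T j)) :
    IsNashOn (subU u T) T' ss ↔ IsNashOn u (fun i => Subtype.val '' T' i) (coeProf T ss) := by
  constructor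
  · rintro ⟨hin, hne⟩
    refine ⟨fun i => ⟨ss i, hin i, rfl⟩, ?_⟩
    rintro i t ⟨tt, htt, rfl⟩
    have := hne i tt htt
    simp only [subU, coe_update] at this
    exact this
  · rintro ⟨hin, hne⟩
    refine ⟨fun i => ?_, fun i tt htt => ?_⟩
    · obtain ⟨a, ha, hav⟩ := hin i
      rwa [show a = ss i from Subtype.ext hav] at ha
    · have := hne i (↑tt) ⟨tt, htt, rfl⟩
      simp only [subU, coe_update]
      exact this

lemma uss_sub {S : Fin n → Type*} (u : ∀ i : Fin n, (∀ j, S j) → ℝ)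
    (T : ∀ i, Set (S i)) (h : USS u) : USS (subU u T) := by
  intro T' hT'
  obtain ⟨s₀, hs₀, huniq⟩ := h (fun i => Subtype.val '' T' i) (fun i => (hT' i).image _)
  have hmem : ∀ j, s₀ j ∈ Subtype.val '' T' j := hs₀.1
  choose f hf1 hf2 using hmem
  have hcoef : coeProf T f = s₀ := funext hf2
  refine ⟨f, ?_, ?_⟩
  · show IsNashOn (subU u T) T' f
    rw [nashOn_sub_iff, hcoef]; exact hs₀
  · intro yy hyy
    have hy : coeProf T yy = s₀ := huniq _ ((nashOn_sub_iff u T T' yy).mp hyy)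
    funext j
    exact Subtype.ext (by rw [hf2 j]; exact congrFun hy j)

lemma step_of_improve {S : Fin n → Type*} [∀ i, Finite (S i)] [∀ i, Nonempty (S i)]
    (u : ∀ i : Fin n, (∀ j, S j) → ℝ) (t : ∀ j, S j) (i : Fin n) (y : S i)
    (hy : u i t < u i (Function.update t i y)) :
    ∃ c : S i, IsBest u t (Function.update t i c) ∧
      ∀ z : S i, u i (Function.update t i z) ≤ u i (Function.update t i c) := by
  obtain ⟨c, hc⟩ := Finite.exists_max (fun z : S i => u i (Function.update t i z))
  have hlt : u i t < u i (Function.update t i c) := lt_of_lt_of_le hy (hc y)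
  have hcc : Function.update t i c i = c := Function.update_self i c t
  refine ⟨c, ⟨i, ?_, ?_, hlt, ?_⟩, hc⟩
  · rw [hcc]
  · rw [hcc]
    intro hct
    rw [hct, Function.update_eq_self] at hlt
    exact lt_irrefl _ hlt
  · exact hc

lemma lift_path {S : Fin n → Type*} (u : ∀ i : Fin n, (∀ j, S j) → ℝ)
    (T : ∀ i, Set (S i)) (s : ∀ j, S j)
    (LC : ∀ tt tt', Relation.ReflTransGen (IsBest u) s (coeProf T tt) →
      IsBest (subU u T) tt tt' → IsBest u (coeProf T tt) (coeProf T tt'))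
    {a b : ∀ j, ↥(T j)} (hab : Relation.ReflTransGen (IsBest (subU u T)) a b)
    (ha : Relation.ReflTransGen (IsBest u) s (coeProf T a)) :
    Relation.ReflTransGen (IsBest u) s (coeProf T b) := by
  induction hab with
  | refl => exact ha
  | tail h1 h2 ih => exact ih.tail (LC _ _ ih h2)

lemma main_aux {n : ℕ} : ∀ (m : ℕ) (S : Fin n → Type v)
    (hF : ∀ i, Finite (S i)) (hN : ∀ i, Nonempty (S i))
    (u : ∀ i : Fin n, (∀ j, S j) → ℝ),
    (∑ i, Nat.card (S i)) ≤ m → USS u →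
    ∀ s, ∃ e, Relation.ReflTransGen (IsBest u) s e ∧ IsNash u e := by
  intro m
  induction m with
  | zero =>
    intro S hF hN u hsum h s
    refine ⟨s, .refl, fun i => ?_⟩
    haveI := hF; haveI := hN
    exfalso
    have h1 : 1 ≤ Nat.card (S i) := Nat.card_pos
    have h2 : Nat.card (S i) ≤ ∑ j, Nat.card (S j) :=
      Finset.single_le_sum (f := fun j => Nat.card (S j)) (fun _ _ => Nat.zero_le _)
        (Finset.mem_univ i)
    omega
  | succ m ih =>
    intro S hF hN u hsum h s
    haveI := hF; haveI := hN
    by_cases hbig : ∃ i₀, 2 ≤ Nat.card (S i₀)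
    · obtain ⟨i₀, hi₀⟩ := hbig
      by_cases hfull : ∀ i, SpanBR u s i = Set.univ
      · -- Case 2: the span is everything.  Freeze player i₀ at the strategy x i₀,
        -- where x is the unique Nash equilibrium of the full game.
        obtain ⟨x, hx, hxu⟩ := h (fun _ => Set.univ) (fun i => Set.univ_nonempty)
        have hxNash : IsNash u x := fun i t => hx.2 i t trivial
        have hxsp : x i₀ ∈ SpanBR u s i₀ := by rw [hfull i₀]; trivial
        obtain ⟨t, hts, hti⟩ := hxsp
        set T₀ : ∀ i, Set (S i) :=
          fun i => {y | i ≠ i₀ ∨ Function.update x i y = x} with hT₀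
        have memT₀ : ∀ j (y : S j), j ≠ i₀ → y ∈ T₀ j := fun j y hj => Or.inl hj
        have memT₀x : ∀ j, x j ∈ T₀ j := fun j => Or.inr (Function.update_eq_self j x)
        have memT₀i : ∀ y : S i₀, y ∈ T₀ i₀ ↔ y = x i₀ := by
          intro y
          constructor
          · rintro (hc | hc)
            · exact absurd rfl hc
            · have := congrFun hc i₀
              rwa [Function.update_self] at this
          · rintro rfl
            exact Or.inr (Function.update_eq_self i₀ x)
        have hTne : ∀ j, (T₀ j).Nonempty := fun j => ⟨x j, memT₀x j⟩
        haveI : ∀ j, Finite ↥(T₀ j) := fun j => Subtype.finite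
        haveI : ∀ j, Nonempty ↥(T₀ j) := fun j => ⟨⟨x j, memT₀x j⟩⟩
        -- cardinality decrease
        have hcard : (∑ j, Nat.card ↥(T₀ j)) ≤ m := by
          have hlt : (∑ j, Nat.card ↥(T₀ j)) < ∑ j, Nat.card (S j) := by
            refine Finset.sum_lt_sum (fun j _ => ?_) ⟨i₀, Finset.mem_univ i₀, ?_⟩
            · exact Nat.card_le_card_of_injective _ Subtype.val_injective
            · have hsing : T₀ i₀ = {x i₀} := Set.ext fun y => by
                rw [memT₀i y]; exact Iff.rfl
              have : Nat.card ↥(T₀ i₀) = 1 := by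
                rw [Nat.card_coe_set_eq, hsing, Set.ncard_singleton]
              omega
          omega
        -- starting profile in the subgame
        have htmem : ∀ j, t j ∈ T₀ j := by
          intro j
          rcases eq_or_ne j i₀ with rfl | hj
          · exact (memT₀i (t j)).mpr hti
          · exact memT₀ j (t j) hj
        set tt : ∀ j, ↥(T₀ j) := fun j => ⟨t j, htmem j⟩ with htt
        have hcoet : coeProf T₀ tt = t := rfl
        obtain ⟨ww, hwwpath, hwwnash⟩ :=
          ih (fun j => ↥(T₀ j)) (fun j => inferInstance) (fun j => inferInstance)
            (subU u T₀) hcard (uss_sub u T₀ h) tt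
        -- lift the path
        have LC : ∀ a b, Relation.ReflTransGen (IsBest u) t (coeProf T₀ a) →
            IsBest (subU u T₀) a b → IsBest u (coeProf T₀ a) (coeProf T₀ b) := by
          intro a b _ hstep
          obtain ⟨i, heq, hne, hlt, hbest⟩ := hstep
          have hii : i ≠ i₀ := by
            rintro rfl
            apply hne
            apply Subtype.ext
            rw [(memT₀i _).mp (b i).2, (memT₀i _).mp (a i).2]
          have hcoe : coeProf T₀ b = Function.update (coeProf T₀ a) i ↑(b i) := by
            conv_lhs => rw [heq]
            exact coe_update T₀ a i (b i)
          refine ⟨i, hcoe, fun hh => hne (Subtype.ext hh), hlt, fun z => ?_⟩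
          have := hbest ⟨z, memT₀ i z hii⟩
          simp only [subU, coe_update] at this
          exact this
        have hwreach : Relation.ReflTransGen (IsBest u) t (coeProf T₀ ww) :=
          lift_path u T₀ t LC hwwpath (hcoet ▸ Relation.ReflTransGen.refl)
        set w : ∀ j, S j := coeProf T₀ ww with hw
        -- w is a Nash equilibrium of the subgame T₀ in the original sense
        have hwNashOn : IsNashOn u T₀ w := by
          refine ⟨fun j => (ww j).2, fun i y hy => ?_⟩
          have := hwwnash i ⟨y, hy⟩
          simp only [subU, coe_update] at this
          exact this
        have hxNashOn : IsNashOn u T₀ x := ⟨memT₀x, fun i y _ => hxNash i y⟩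
        obtain ⟨z₀, hz₀, hz₀u⟩ := h T₀ hTne
        have hwx : w = x := (hz₀u w hwNashOn).trans (hz₀u x hxNashOn).symm
        exact ⟨x, (hts.trans hwreach).trans (hwx ▸ Relation.ReflTransGen.refl), hxNash⟩
      · -- Case 1: the span is a proper subgame; recurse into it.
        push_neg at hfull
        obtain ⟨i₁, hi₁⟩ := hfull
        set T : ∀ i, Set (S i) := SpanBR u s with hT
        haveI : ∀ j, Finite ↥(T j) := fun j => Subtype.finite
        haveI hTN : ∀ j, Nonempty ↥(T j) := fun j => ⟨⟨s j, ⟨s, Relation.ReflTransGen.refl, rfl⟩⟩⟩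
        have hcard : (∑ j, Nat.card ↥(T j)) ≤ m := by
          have hlt : (∑ j, Nat.card ↥(T j)) < ∑ j, Nat.card (S j) := by
            refine Finset.sum_lt_sum (fun j _ => ?_) ⟨i₁, Finset.mem_univ i₁, ?_⟩
            · exact Nat.card_le_card_of_injective _ Subtype.val_injective
            · have hss : T i₁ ⊂ Set.univ := Set.ssubset_univ_iff.mpr hi₁
              have := Set.ncard_lt_ncard hss Set.finite_univ
              rw [Set.ncard_univ] at this
              rw [Nat.card_coe_set_eq]
              exact this
          omega
        set ss : ∀ j, ↥(T j) := fun j => ⟨s j, ⟨s, Relation.ReflTransGen.refl, rfl⟩⟩ with hss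
        have hcoes : coeProf T ss = s := rfl
        obtain ⟨ee, heepath, heenash⟩ :=
          ih (fun j => ↥(T j)) (fun j => inferInstance) (fun j => inferInstance)
            (subU u T) hcard (uss_sub u T h) ss
        have LC : ∀ a b, Relation.ReflTransGen (IsBest u) s (coeProf T a) →
            IsBest (subU u T) a b → IsBest u (coeProf T a) (coeProf T b) := by
          intro a b hreach hstep
          obtain ⟨i, heq, hne, hlt, hbest⟩ := hstep
          have hcoe : coeProf T b = Function.update (coeProf T a) i ↑(b i) := by
            conv_lhs => rw [heq]
            exact coe_update T a i (b i)
          have hlt' : u i (coeProf T a) < u i (coeProf T b) := hlt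
          obtain ⟨c, hcstep, hcmax⟩ := step_of_improve u (coeProf T a) i ↑(b i)
            (by rw [← hcoe] at *; exact hlt')
          have hcT : c ∈ T i :=
            ⟨Function.update (coeProf T a) i c, hreach.tail hcstep, Function.update_self i c _⟩
          refine ⟨i, hcoe, fun hh => hne (Subtype.ext hh), hlt', fun z => ?_⟩
          have h1 : u i (Function.update (coeProf T a) i c) ≤ u i (coeProf T b) := by
            have := hbest ⟨c, hcT⟩
            simp only [subU, coe_update] at this
            exact this
          exact le_trans (hcmax z) h1
        have hereach : Relation.ReflTransGen (IsBest u) s (coeProf T ee) :=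
          lift_path u T s LC heepath (hcoes ▸ Relation.ReflTransGen.refl)
        set e : ∀ j, S j := coeProf T ee with he
        refine ⟨e, hereach, fun i y => ?_⟩
        by_contra hy
        push_neg at hy
        obtain ⟨c, hcstep, hcmax⟩ := step_of_improve u e i y hy
        have hcT : c ∈ T i :=
          ⟨Function.update e i c, hereach.tail hcstep, Function.update_self i c _⟩
        have h1 : u i (Function.update e i c) ≤ u i e := by
          have := heenash i ⟨c, hcT⟩
          simp only [subU, coe_update] at this
          exact this
        have h2 : u i e < u i (Function.update e i c) := lt_of_lt_of_le hy (hcmax y)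
        exact absurd h1 (not_le.mpr h2)
    · -- all strategy sets are singletons: s itself is a Nash equilibrium
      push_neg at hbig
      refine ⟨s, .refl, fun i y => ?_⟩
      have h1 : Nat.card (S i) = 1 := by
        have := @Nat.card_pos (S i) _ _
        have := hbig i
        omega
      haveI : Subsingleton (S i) := (Nat.card_eq_one_iff_unique.mp h1).1
      rw [Subsingleton.elim y (s i), Function.update_eq_self]

end Proof

theorem stmt4 {n : ℕ} {S : Fin n → Type*} [∀ i, Fintype (S i)] [∀ i, Nonempty (S i)]
    (u : ∀ i : Fin n, (∀ j, S j) → ℝ) (h : USS u) :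
    WeaklyAcyclicBest u := by
  intro s
  exact main_aux (∑ i, Nat.card (S i)) S (fun i => inferInstance) (fun i => inferInstance)
    u le_rfl h s
end

section
/- In a finite strict game, a pure Nash equilibrium cannot belong to a non-trivial sink of the best-response dynamics graph, and neither can any strategy profile differing from a pure Nash equilibrium in exactly one player's strategy. -/
theorem stmt5 {n : ℕ} {S : Fin n → Type*} [∀ i, Fintype (S i)] [∀ i, Nonempty (S i)]
    (u : ∀ i : Fin n, (∀ j, S j) → ℝ) (hstrict : StrictGame u)
    (X : Set (∀ j, S j)) (hX : IsSinkBest u X) (hnt : ∃ a ∈ X, ∃ b ∈ X, a ≠ b)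
    (e : ∀ j, S j) (he : IsNash u e) :
    e ∉ X ∧ ∀ s : ∀ j, S j, (∃ i, s = Function.update e i (s i) ∧ s i ≠ e i) → s ∉ X := by
  obtain ⟨a, ha, b, hb, hab⟩ := hnt
  have hnostep : ∀ s', ¬ IsBest u e s' := by
    rintro s' ⟨i, hupd, hne, hlt, _⟩
    have h := he i (s' i)
    rw [← hupd] at h
    exact absurd hlt (not_lt.mpr h)
  have heX : e ∉ X := by
    intro heXmem
    obtain ⟨_, hclosed, hconn⟩ := hX
    have hone : a ≠ e ∨ b ≠ e := by
      by_contra h; push_neg at h; exact hab (h.1.trans h.2.symm)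
    rcases hone with h | h
    · rcases (hconn e heXmem a ha).cases_head with h' | ⟨c, hc, _⟩
      · exact h h'.symm
      · exact hnostep c hc
    · rcases (hconn e heXmem b hb).cases_head with h' | ⟨c, hc, _⟩
      · exact h h'.symm
      · exact hnostep c hc
  refine ⟨heX, ?_⟩
  rintro s ⟨i, hs, hsi⟩ hsX
  have hbest : IsBest u s e := by
    refine ⟨i, ?_, hsi.symm, ?_, ?_⟩
    · funext j; by_cases hj : j = i
      · subst hj; simp
      · rw [hs]; simp [Function.update_of_ne hj]
    · have hle := he i (s i)
      have hne := hstrict i e (s i) hsi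
      rw [← hs] at hle hne
      exact lt_of_le_of_ne hle hne
    · intro t
      have hupd : Function.update s i t = Function.update e i t := by
        rw [hs]; simp
      rw [hupd]; exact he i t
  exact heX (hX.2.1 s hsX e hbest)
end

section
/- If a finite game Γ has a non-trivial sink X of its best-response dynamics, then X is not entirely contained in any subgame Γ' of Γ that is weakly acyclic under best response. -/
theorem stmt6 {n : ℕ} {S : Fin n → Type*} [∀ i, Fintype (S i)] [∀ i, Nonempty (S i)]
    (u : ∀ i : Fin n, (∀ j, S j) → ℝ)
    (X : Set (∀ j, S j)) (hX : IsSinkBest u X) (hnt : ∃ a ∈ X, ∃ b ∈ X, a ≠ b)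
    (T : ∀ i, Set (S i)) (hT : ∀ i, (T i).Nonempty)
    (hwa : ∀ s, InSub T s →
      ∃ e, Relation.ReflTransGen (IsBestOn u T) s e ∧ IsNashOn u T e) :
    ¬ ∀ s ∈ X, InSub T s := by
  intro hsub
  obtain ⟨hne, hclosed, hconn⟩ := hX
  have key : ∀ x ∈ X, ∀ x', IsBestOn u T x x' → IsBest u x x' := by
    rintro x hx x' ⟨-, hx'T, i, heq, hne', hlt, hmax⟩
    obtain ⟨t₀, ht₀⟩ := Finite.exists_max (fun t : S i => u i (Function.update x i t))
    set y := Function.update x i t₀ with hy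
    have hyi : y i = t₀ := Function.update_self i t₀ x
    have hx'y : u i x' ≤ u i y := by
      have := ht₀ (x' i)
      rwa [← heq] at this
    have hxy : u i x < u i y := lt_of_lt_of_le hlt hx'y
    have ht₀ne : t₀ ≠ x i := by
      intro h
      rw [hy, h, Function.update_eq_self] at hxy
      exact lt_irrefl _ hxy
    have hbest : IsBest u x y :=
      ⟨i, by rw [hyi], by rw [hyi]; exact ht₀ne, hxy, fun t => ht₀ t⟩
    have hyX : y ∈ X := hclosed x hx y hbest
    have hyT : y i ∈ T i := hsub y hyX i
    have hyx' : u i y ≤ u i x' := by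
      have := hmax t₀ (by rwa [hyi] at hyT)
      rwa [← hy] at this
    exact ⟨i, heq, hne', hlt, fun t => le_trans (ht₀ t) hyx'⟩
  have stay : ∀ x ∈ X, ∀ e, Relation.ReflTransGen (IsBestOn u T) x e → e ∈ X := by
    intro x hx e h
    induction h with
    | refl => exact hx
    | tail _ hbc ih => exact hclosed _ ih _ (key _ ih _ hbc)
  obtain ⟨p, hp, q, hq, hpq⟩ := hnt
  obtain ⟨e, hpath, heT, hNash⟩ := hwa p (hsub p hp)
  have heX : e ∈ X := stay p hp e hpath
  obtain ⟨c, hcX, hce⟩ : ∃ c ∈ X, c ≠ e := by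
    by_cases h : p = e
    · exact ⟨q, hq, by rw [← h]; exact Ne.symm hpq⟩
    · exact ⟨p, hp, h⟩
  have hpath2 := hconn e heX c hcX
  rcases (Relation.ReflTransGen.cases_head hpath2) with h | ⟨e', hstep, -⟩
  · exact hce h.symm
  · obtain ⟨i, heq, hne', hlt, hm⟩ := hstep
    have he'X : e' ∈ X := hclosed e heX e' ⟨i, heq, hne', hlt, hm⟩
    have := hNash i (e' i) (hsub e' he'X i)
    rw [← heq] at this
    exact absurd hlt (not_lt.mpr this)
end

section
/- Every 2-player game in which player 1 has exactly 2 strategies and which possesses at least one pure Nash equilibrium is weakly acyclic under best response. -/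
section Aux

variable {S : Fin 2 → Type*} [∀ i, Fintype (S i)] [∀ i, Nonempty (S i)]

private lemma prof_ext (p q : ∀ j : Fin 2, S j) (h0 : p 0 = q 0) (h1 : p 1 = q 1) : p = q := by
  funext i
  fin_cases i <;> assumption

private lemma card2 (hcard : Fintype.card (S 0) = 2) (a b t : S 0) (hab : a ≠ b) :
    t = a ∨ t = b := by
  classical
  by_contra h
  push_neg at h
  have h3 : ({a, b, t} : Finset (S 0)).card = 3 := by
    rw [Finset.card_insert_of_notMem (by simp [hab, Ne.symm h.1]),
      Finset.card_insert_of_notMem (by simp [Ne.symm h.2]), Finset.card_singleton]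
  have hle := Finset.card_le_univ ({a, b, t} : Finset (S 0))
  rw [h3] at hle
  omega

private lemma step2 (u : ∀ i : Fin 2, (∀ j, S j) → ℝ) (s : ∀ j, S j) :
    ∃ s', Relation.ReflTransGen (IsBest u) s s' ∧ s' 0 = s 0 ∧
      ∀ t : S 1, u 1 (Function.update s' 1 t) ≤ u 1 s' := by
  obtain ⟨b, hb⟩ := Finite.exists_max (fun t : S 1 => u 1 (Function.update s 1 t))
  by_cases h : u 1 s < u 1 (Function.update s 1 b)
  · refine ⟨Function.update s 1 b, Relation.ReflTransGen.single ?_, ?_, ?_⟩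
    · refine ⟨1, by simp, ?_, h, fun t => hb t⟩
      simp only [Function.update_self]
      intro hbe
      rw [hbe, Function.update_eq_self] at h
      exact lt_irrefl _ h
    · rw [Function.update_of_ne (by decide)]
    · intro t
      rw [Function.update_idem]
      exact hb t
  · exact ⟨s, Relation.ReflTransGen.refl, rfl, fun t => (hb t).trans (not_lt.1 h)⟩

private lemma step1 (hcard : Fintype.card (S 0) = 2) (u : ∀ i : Fin 2, (∀ j, S j) → ℝ)
    (s : ∀ j, S j) (x : S 0) (hx : u 0 s < u 0 (Function.update s 0 x)) :
    IsBest u s (Function.update s 0 x) := by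
  have hxs : x ≠ s 0 := by
    intro h
    rw [h, Function.update_eq_self] at hx
    exact lt_irrefl _ hx
  refine ⟨0, by simp, by simpa using hxs, hx, ?_⟩
  intro t
  rcases card2 hcard x (s 0) t hxs with h | h
  · rw [h]
  · rw [h, Function.update_eq_self]
    exact hx.le

private lemma finishA (u : ∀ i : Fin 2, (∀ j, S j) → ℝ) (e : ∀ j, S j) (he : IsNash u e)
    (p : ∀ j, S j) (h0 : p 0 = e 0)
    (h1 : ∀ t : S 0, u 0 (Function.update p 0 t) ≤ u 0 p) :
    ∃ z, Relation.ReflTransGen (IsBest u) p z ∧ IsNash u z := by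
  by_cases h2 : ∀ t : S 1, u 1 (Function.update p 1 t) ≤ u 1 p
  · refine ⟨p, Relation.ReflTransGen.refl, fun i => ?_⟩
    fin_cases i
    · exact h1
    · exact h2
  · push_neg at h2
    obtain ⟨t, ht⟩ := h2
    have key : ∀ t' : S 1, Function.update p 1 t' = Function.update e 1 t' := by
      intro t'
      refine prof_ext _ _ ?_ (by simp)
      rw [Function.update_of_ne (by decide), Function.update_of_ne (by decide), h0]
    have hmax : ∀ t' : S 1, u 1 (Function.update p 1 t') ≤ u 1 e := by
      intro t'
      rw [key]
      exact he 1 t'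
    have hE : Function.update p 1 (e 1) = e := by
      rw [key, Function.update_eq_self]
    have hlt : u 1 p < u 1 e := lt_of_lt_of_le ht (hmax t)
    refine ⟨e, Relation.ReflTransGen.single ⟨1, ?_, ?_, hlt, ?_⟩, he⟩
    · rw [← hE]
      simp
    · intro heq
      have : e = p := by
        rw [← hE, heq, Function.update_eq_self]
      rw [this] at hlt
      exact lt_irrefl _ hlt
    · exact hmax

end Aux

theorem stmt7 {S : Fin 2 → Type*} [∀ i, Fintype (S i)] [∀ i, Nonempty (S i)]
    (u : ∀ i : Fin 2, (∀ j, S j) → ℝ) (hcard : Fintype.card (S 0) = 2)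
    (hne : ∃ s, IsNash u s) : WeaklyAcyclicBest u := by
  classical
  obtain ⟨e, he⟩ := hne
  have main2 : ∀ p : ∀ j, S j, p 0 ≠ e 0 →
      ∃ z, Relation.ReflTransGen (IsBest u) p z ∧ IsNash u z := by
    intro p hp
    obtain ⟨p1, hre, hp10, hbr⟩ := step2 u p
    by_cases h1 : ∀ t : S 0, u 0 (Function.update p1 0 t) ≤ u 0 p1
    · refine ⟨p1, hre, fun i => ?_⟩
      fin_cases i
      · exact h1
      · exact hbr
    · push_neg at h1
      obtain ⟨x, hx⟩ := h1
      have hxne : x ≠ p1 0 := by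
        intro h
        rw [h, Function.update_eq_self] at hx
        exact lt_irrefl _ hx
      have hxa : x = e 0 := by
        rcases card2 hcard (e 0) (p1 0) x (by rw [hp10]; exact fun h => hp h.symm) with h | h
        · exact h
        · exact absurd h hxne
      have hstep : IsBest u p1 (Function.update p1 0 x) := step1 hcard u p1 x hx
      have hp20 : (Function.update p1 0 x) 0 = e 0 := by simp [hxa]
      have hhappy : ∀ t : S 0,
          u 0 (Function.update (Function.update p1 0 x) 0 t) ≤ u 0 (Function.update p1 0 x) := by
        intro t
        rcases card2 hcard x (p1 0) t hxne with h | h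
        · rw [h, Function.update_idem]
        · rw [h, Function.update_idem, Function.update_eq_self]
          exact hx.le
      obtain ⟨z, hz, hzn⟩ := finishA u e he (Function.update p1 0 x) hp20 hhappy
      exact ⟨z, (hre.trans (Relation.ReflTransGen.single hstep)).trans hz, hzn⟩
  intro s
  by_cases hs : s 0 = e 0
  · obtain ⟨s1, hre, hs10, hbr⟩ := step2 u s
    by_cases h1 : ∀ t : S 0, u 0 (Function.update s1 0 t) ≤ u 0 s1
    · refine ⟨s1, hre, fun i => ?_⟩
      fin_cases i
      · exact h1
      · exact hbr
    · push_neg at h1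
      obtain ⟨x, hx⟩ := h1
      have hxne : x ≠ s1 0 := by
        intro h
        rw [h, Function.update_eq_self] at hx
        exact lt_irrefl _ hx
      have hstep : IsBest u s1 (Function.update s1 0 x) := step1 hcard u s1 x hx
      have hne0 : (Function.update s1 0 x) 0 ≠ e 0 := by
        simp only [Function.update_self]
        rw [← hs, ← hs10]
        exact hxne
      obtain ⟨z, hz, hzn⟩ := main2 (Function.update s1 0 x) hne0
      exact ⟨z, (hre.trans (Relation.ReflTransGen.single hstep)).trans hz, hzn⟩
  · exact main2 s hs
end

section
/- In a strict 2×2×2 game with a pure Nash equilibrium s*, the at most four profiles that differ from s* in at least two coordinates cannot contain a best-response cycle; consequently the best-response dynamics graph of such a game has no non-trivial sink. -/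
/-! In a strict game a unilateral deviation from a pure equilibrium `s*` is undone by a best
response, so a sink containing more than one profile stays at Hamming distance at least `2`
from `s*`. With two strategies per player every move changes that distance by exactly one,
and with three players the profiles at distance at least `2` are the three at distance `2`
and the unique profile at distance `3`. Best-response paths among them therefore alternate
through the profile at distance `3`, so any three consecutive moves contain a move `a → b`
immediately followed by its reversal `b → a`, which would let one player strictly improve
twice and return to where they started. -/

open Function Relation

lemma Relation.TransGen.exists_three_steps_of_self {α : Type*} {r : α → α → Prop} {a : α}
    (h : TransGen r a a) : ∃ b c d, r a b ∧ r b c ∧ r c d := by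
  have succ_on_cycle : ∀ {x}, TransGen r x x → ∃ y, r x y ∧ TransGen r y y := fun hx =>
    let ⟨y, hxy, hyx⟩ := TransGen.head'_iff.mp hx
    ⟨y, hxy, TransGen.tail' hyx hxy⟩
  obtain ⟨b, hab, hb⟩ := succ_on_cycle h
  obtain ⟨c, hbc, hc⟩ := succ_on_cycle hb
  obtain ⟨d, hcd, -⟩ := succ_on_cycle hc
  exact ⟨b, c, d, hab, hbc, hcd⟩

lemma eq_of_ne_of_ne_of_card_eq_two {α : Type*} (hα : Nat.card α = 2) {a b c : α}
    (hb : b ≠ a) (hc : c ≠ a) : b = c :=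
  ((Nat.card_eq_two_iff' a).mp hα).unique hb hc

section HammingTwoStrategies

variable {ι : Type*} [Fintype ι] {β : ι → Type*} [∀ i, DecidableEq (β i)]

lemma eq_of_hammingDist_eq_card {x x' y : ∀ i, β i} (hcard : ∀ i, Nat.card (β i) = 2)
    (hx : hammingDist x y = Fintype.card ι) (hx' : hammingDist x' y = Fintype.card ι) :
    x = x' := by
  have differs_everywhere :
      ∀ z : ∀ i, β i, hammingDist z y = Fintype.card ι → ∀ i, z i ≠ y i :=
    fun z hz => by simpa [hammingDist, Finset.card_eq_iff_eq_univ] using hz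
  funext i
  exact eq_of_ne_of_ne_of_card_eq_two (hcard i) (differs_everywhere x hx i)
    (differs_everywhere x' hx' i)

variable [DecidableEq ι]

lemma hammingDist_update_of_eq_of_ne {x y : ∀ i, β i} {i : ι} {v : β i}
    (hx : x i = y i) (hv : v ≠ y i) :
    hammingDist (update x i v) y = hammingDist x y + 1 := by
  have hfilter : Finset.univ.filter (fun j => update x i v j ≠ y j) =
      insert i (Finset.univ.filter fun j => x j ≠ y j) := by
    ext j
    by_cases hj : j = i
    · subst hj; simp [hv]
    · simp [hj]
  rw [hammingDist, hfilter, Finset.card_insert_of_notMem (by simp [hx]), hammingDist]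

lemma hammingDist_update_of_card_eq_two {x y : ∀ i, β i} {i : ι} {v : β i}
    (hcard : Nat.card (β i) = 2) (hv : v ≠ x i) :
    hammingDist (update x i v) y = hammingDist x y + 1 ∨
      hammingDist x y = hammingDist (update x i v) y + 1 := by
  by_cases hx : x i = y i
  · exact .inl (hammingDist_update_of_eq_of_ne hx (hx ▸ hv))
  · right
    have hvy : v = y i := eq_of_ne_of_ne_of_card_eq_two hcard hv (Ne.symm hx)
    simpa [update_idem] using
      hammingDist_update_of_eq_of_ne (x := update x i v) (v := x i) (by simp [hvy]) hx

lemma exists_eq_update_of_hammingDist_eq_one {x y : ∀ i, β i} (h : hammingDist x y = 1) :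
    ∃ i, x = update y i (x i) := by
  obtain ⟨i, hi⟩ := Finset.card_eq_one.mp h
  refine ⟨i, funext fun j => ?_⟩
  by_cases hj : j = i
  · subst hj; simp
  · rw [update_of_ne hj]
    by_contra hne
    have : j ∈ Finset.univ.filter (fun j => x j ≠ y j) := by simp [hne]
    exact hj (by simpa [hi] using this)

end HammingTwoStrategies

section BestResponse

variable {n : ℕ} {S : Fin n → Type*} {u : Fin n → (∀ j, S j) → ℝ}

lemma IsBest.asymm {a b : ∀ j, S j} (hab : IsBest u a b) : ¬ IsBest u b a := by
  rintro ⟨j, ha, -, hlt', -⟩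
  obtain ⟨i, -, hne, hlt, -⟩ := hab
  obtain rfl : j = i := by
    by_contra hji
    exact hne (by rw [ha, update_of_ne (Ne.symm hji)])
  linarith

lemma IsNash.not_isBest {s t : ∀ j, S j} (hs : IsNash u s) : ¬ IsBest u s t := by
  rintro ⟨i, ht, -, hlt, -⟩
  have := hs i (t i)
  rw [← ht] at this
  linarith

lemma IsNash.isBest_update_self {s : ∀ j, S j} (hstrict : StrictGame u) (hs : IsNash u s)
    {i : Fin n} {x : S i} (hx : x ≠ s i) : IsBest u (update s i x) s := by
  refine ⟨i, by simp, by simpa using hx.symm, ?_, fun t => by simpa using hs i t⟩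
  exact lt_of_le_of_ne (hs i x) (hstrict i s x hx)

lemma IsNash.reflTransGen_isBest_of_hammingDist_le_one [∀ i, DecidableEq (S i)]
    {s p : ∀ j, S j} (hstrict : StrictGame u) (hs : IsNash u s) (hp : hammingDist p s ≤ 1) :
    ReflTransGen (IsBest u) p s := by
  rcases Nat.le_one_iff_eq_zero_or_eq_one.mp hp with h0 | h1
  · rw [hammingDist_eq_zero.mp h0]
  · obtain ⟨i, hpi⟩ := exists_eq_update_of_hammingDist_eq_one h1
    have hne : p i ≠ s i := fun heq => by
      rw [heq, update_eq_self] at hpi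
      simp [hpi] at h1
    exact .single (hpi ▸ hs.isBest_update_self hstrict hne)

namespace IsSinkBest

variable {X : Set (∀ j, S j)} (hX : IsSinkBest u X)
include hX

lemma mem_of_reflTransGen {a b : ∀ j, S j} (ha : a ∈ X) (h : ReflTransGen (IsBest u) a b) :
    b ∈ X := by
  induction h with
  | refl => exact ha
  | tail _ hbc ih => exact hX.2.1 _ ih _ hbc

lemma eq_of_isNash_mem {s t : ∀ j, S j} (hs : IsNash u s) (hsX : s ∈ X) (ht : t ∈ X) :
    t = s := by
  rcases (hX.2.2 s hsX t ht).cases_head with heq | ⟨y, hy, -⟩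
  · exact heq.symm
  · exact absurd hy hs.not_isBest

lemma transGen_self_of_ne {a b : ∀ j, S j} (ha : a ∈ X) (hb : b ∈ X) (hab : a ≠ b) :
    TransGen (IsBest u) a a := by
  rcases reflTransGen_iff_eq_or_transGen.mp (hX.2.2 a ha b hb) with heq | hab'
  · exact absurd heq.symm hab
  · exact hab'.trans_left (hX.2.2 b hb a ha)

lemma two_le_hammingDist [∀ i, DecidableEq (S i)] {s p : ∀ j, S j} (hstrict : StrictGame u)
    (hs : IsNash u s) (hsX : s ∉ X) (hp : p ∈ X) : 2 ≤ hammingDist p s := by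
  by_contra! hlt
  exact hsX (hX.mem_of_reflTransGen hp
    (hs.reflTransGen_isBest_of_hammingDist_le_one hstrict (Nat.le_of_lt_succ hlt)))

end IsSinkBest

lemma IsBest.hammingDist_succ_or [∀ i, DecidableEq (S i)] {a b s : ∀ j, S j}
    (hcard : ∀ i, Nat.card (S i) = 2) (h : IsBest u a b) :
    hammingDist b s = hammingDist a s + 1 ∨ hammingDist a s = hammingDist b s + 1 := by
  obtain ⟨i, hb, hne, -⟩ := h
  rw [hb]
  exact hammingDist_update_of_card_eq_two (hcard i) hne

end BestResponse

lemma not_isBest_three_steps_of_two_le_hammingDist {S : Fin 3 → Type*}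
    [∀ i, DecidableEq (S i)] {u : Fin 3 → (∀ j, S j) → ℝ}
    (hcard : ∀ i, Nat.card (S i) = 2) {s a b c d : ∀ j, S j}
    (hab : IsBest u a b) (hbc : IsBest u b c) (hcd : IsBest u c d) (ha : 2 ≤ hammingDist a s)
    (hb : 2 ≤ hammingDist b s) (hc : 2 ≤ hammingDist c s) (hd : 2 ≤ hammingDist d s) :
    False := by
  have hle : ∀ x : ∀ j, S j, hammingDist x s ≤ 3 := fun x => hammingDist_le_card_fintype
  have hbounds : _ ∧ _ ∧ _ ∧ _ := ⟨hle a, hle b, hle c, hle d⟩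
  have hab_dist := hab.hammingDist_succ_or (s := s) hcard
  have hbc_dist := hbc.hammingDist_succ_or (s := s) hcard
  have hcd_dist := hcd.hammingDist_succ_or (s := s) hcard
  have hfar : ∀ {x y : ∀ j, S j}, hammingDist x s = 3 → hammingDist y s = 3 → x = y :=
    fun hx hy => eq_of_hammingDist_eq_card hcard (by simpa using hx) (by simpa using hy)
  rcases (by omega : (hammingDist a s = 3 ∧ hammingDist c s = 3) ∨
      (hammingDist b s = 3 ∧ hammingDist d s = 3)) with ⟨ha3, hc3⟩ | ⟨hb3, hd3⟩
  · exact hab.asymm (hfar hc3 ha3 ▸ hbc)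
  · exact hbc.asymm (hfar hd3 hb3 ▸ hcd)

theorem stmt10 {S : Fin 3 → Type*} [∀ i, Fintype (S i)] [∀ i, DecidableEq (S i)]
    (u : ∀ i : Fin 3, (∀ j, S j) → ℝ) (hcard : ∀ i, Fintype.card (S i) = 2)
    (hstrict : StrictGame u) (sstar : ∀ j, S j) (hstar : IsNash u sstar) :
    (¬ ∃ s, Relation.TransGen
        (fun a b => IsBest u a b ∧
          2 ≤ (Finset.univ.filter (fun i => a i ≠ sstar i)).card ∧
          2 ≤ (Finset.univ.filter (fun i => b i ≠ sstar i)).card) s s) ∧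
    (∀ X : Set (∀ j, S j), IsSinkBest u X → ¬ ∃ a ∈ X, ∃ b ∈ X, a ≠ b) := by
  have hcard' : ∀ i, Nat.card (S i) = 2 := fun i => Nat.card_eq_fintype_card.trans (hcard i)
  refine ⟨fun ⟨s, hcyc⟩ => ?_, fun X hX ⟨a, ha, b, hb, hab⟩ => ?_⟩
  · obtain ⟨b, c, d, ⟨hsb, hs, hb⟩, ⟨hbc, -, hc⟩, ⟨hcd, -, hd⟩⟩ :=
      hcyc.exists_three_steps_of_self
    exact not_isBest_three_steps_of_two_le_hammingDist hcard' hsb hbc hcd hs hb hc hd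
  · have hsX : sstar ∉ X := fun hs =>
      hab ((hX.eq_of_isNash_mem hstar hs ha).trans (hX.eq_of_isNash_mem hstar hs hb).symm)
    have hfar : ∀ p ∈ X, 2 ≤ hammingDist p sstar := fun p hp =>
      hX.two_le_hammingDist hstrict hstar hsX hp
    obtain ⟨x, y, z, hax, hxy, hyz⟩ :=
      (hX.transGen_self_of_ne ha hb hab).exists_three_steps_of_self
    have hx := hX.2.1 a ha x hax
    have hy := hX.2.1 x hx y hxy
    have hz := hX.2.1 y hy z hyz
    exact not_isBest_three_steps_of_two_le_hammingDist hcard' hax hxy hyz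
      (hfar a ha) (hfar x hx) (hfar y hy) (hfar z hz)
end

section
/- There exists a strict 4-player game with 2 strategies per player that is subgame stable but not weaklyacyclic under better response. -/
/-!
Players are `Fin 4`, arranged in a cycle, and a profile is identified with the set of players
playing `true`. Payoffs are `4` at the all-`true` profile and `s i ∈ {0, 1}` away from the eight
profiles `{k}` and `{k, k+1}`; on those, player `k+1` gets `2` at `{k}`, player `k` gets `2` at
`{k, k+1}`, and everybody else gets `3`. So the only improving deviation there is for the player
with payoff `2` to switch, which moves one step along the cycle
`{0} → {0,1} → {1} → {1,2} → ⋯ → {3,0} → {0}`; no better-response path from `{0}` ever reaches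
an equilibrium. Strictness and the existence of equilibria in all `3 ^ 4` subgames are finite
checks.
-/

open Function

section General

variable {n : ℕ} {S : Fin n → Type*} {u : ∀ i : Fin n, (∀ j, S j) → ℝ}

theorem subgameStable_of_forall_finset [∀ i, Finite (S i)]
    (h : ∀ T : ∀ i, Finset (S i), (∀ i, (T i).Nonempty) → ∃ s : ∀ j, S j,
      (∀ i, s i ∈ T i) ∧ ∀ i, ∀ t ∈ T i, u i (update s i t) ≤ u i s) :
    SubgameStable u := by
  intro T hT
  obtain ⟨s, hs, hnash⟩ := h (fun i => (T i).toFinite.toFinset) (fun i => by simpa using hT i)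
  exact ⟨s, fun i => by simpa using hs i, fun i t ht => hnash i t (by simpa using ht)⟩

theorem not_weaklyAcyclic_of_isBetter_closed {X : Set (∀ j, S j)} {s₀ : ∀ j, S j}
    (h₀ : s₀ ∈ X) (hclosed : ∀ s ∈ X, ∀ s', IsBetter u s s' → s' ∈ X)
    (hX : ∀ s ∈ X, ¬ IsNash u s) : ¬ WeaklyAcyclic u := by
  intro hwa
  obtain ⟨e, hpath, he⟩ := hwa s₀
  refine hX e ?_ he
  clear he
  induction hpath with
  | refl => exact h₀
  | tail _ hstep ih => exact hclosed _ ih _ hstep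

end General

section CycleGame

def singletonProfile (k : Fin 4) : Fin 4 → Bool := fun j => decide (j = k)

def adjacentPairProfile (k : Fin 4) : Fin 4 → Bool := fun j => decide (j = k ∨ j = k + 1)

def cyclePayoff (i : Fin 4) (s : Fin 4 → Bool) : ℤ :=
  if s = fun _ => true then 4
  else if ∃ k, s = singletonProfile k then if s = singletonProfile (i - 1) then 2 else 3
  else if ∃ k, s = adjacentPairProfile k then if s = adjacentPairProfile i then 2 else 3
  else if s i then 1 else 0

noncomputable def cycleGame (i : Fin 4) (s : Fin 4 → Bool) : ℝ := cyclePayoff i s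

def OnCycle (s : Fin 4 → Bool) : Prop := ∃ k, s = singletonProfile k ∨ s = adjacentPairProfile k

instance : DecidablePred OnCycle := fun _ => by unfold OnCycle; infer_instance

theorem cyclePayoff_update_ne :
    ∀ (i : Fin 4) (s : Fin 4 → Bool) (t : Bool), t ≠ s i →
      cyclePayoff i (update s i t) ≠ cyclePayoff i s := by
  decide

set_option maxRecDepth 10000 in
theorem exists_cyclePayoff_nash_of_finset :
    ∀ T : Fin 4 → Finset Bool, (∀ i, (T i).Nonempty) → ∃ s : Fin 4 → Bool,
      (∀ i, s i ∈ T i) ∧ ∀ i, ∀ t ∈ T i, cyclePayoff i (update s i t) ≤ cyclePayoff i s := by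
  decide

theorem onCycle_update_of_cyclePayoff_lt :
    ∀ s, OnCycle s → ∀ (i : Fin 4) (t : Bool), t ≠ s i →
      cyclePayoff i s < cyclePayoff i (update s i t) → OnCycle (update s i t) := by
  decide

theorem exists_cyclePayoff_lt_update_of_onCycle :
    ∀ s, OnCycle s → ∃ (i : Fin 4) (t : Bool), cyclePayoff i s < cyclePayoff i (update s i t) := by
  decide

theorem cycleGame_strictGame : StrictGame cycleGame :=
  fun i s t ht h => cyclePayoff_update_ne i s t ht (Int.cast_inj.mp h)

theorem cycleGame_subgameStable : SubgameStable cycleGame :=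
  subgameStable_of_forall_finset fun T hT => by
    obtain ⟨s, hs, hnash⟩ := exists_cyclePayoff_nash_of_finset T hT
    exact ⟨s, hs, fun i t ht => Int.cast_le.mpr (hnash i t ht)⟩

theorem OnCycle.of_isBetter {s s' : Fin 4 → Bool} (hs : OnCycle s)
    (h : IsBetter cycleGame s s') : OnCycle s' := by
  obtain ⟨i, heq, hne, hlt⟩ := h
  rw [heq] at hlt ⊢
  exact onCycle_update_of_cyclePayoff_lt s hs i _ hne (Int.cast_lt.mp hlt)

theorem OnCycle.not_isNash {s : Fin 4 → Bool} (hs : OnCycle s) : ¬ IsNash cycleGame s := by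
  intro hnash
  obtain ⟨i, t, hlt⟩ := exists_cyclePayoff_lt_update_of_onCycle s hs
  exact (hnash i t).not_gt (Int.cast_lt.mpr hlt)

theorem cycleGame_not_weaklyAcyclic : ¬ WeaklyAcyclic cycleGame :=
  not_weaklyAcyclic_of_isBetter_closed (X := {s | OnCycle s}) (s₀ := singletonProfile 0)
    ⟨0, Or.inl rfl⟩ (fun _ hs _ h => hs.of_isBetter h) (fun _ hs => hs.not_isNash)

end CycleGame

theorem stmt12 : ∃ u : ∀ _ : Fin 4, (∀ _ : Fin 4, Bool) → ℝ,
    StrictGame u ∧ SubgameStable u ∧ ¬ WeaklyAcyclic u :=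
  ⟨cycleGame, cycleGame_strictGame, cycleGame_subgameStable, cycleGame_not_weaklyAcyclic⟩
end

section
/- For every n ≥ 4 there exists a strict n-player game with 2 strategies per player that is subgame stable but not weakly acyclic. -/
set_option maxRecDepth 10000

namespace Stmt13Aux

def tbl : Bool → Bool → Bool → Bool → Fin 4 → ℤ
  | false, false, false, false => ![0,0,0,0]
  | false, false, false, true  => ![2,3,3,5]
  | false, false, true,  false => ![3,3,5,2]
  | false, false, true,  true  => ![3,3,1,4]
  | false, true,  false, false => ![3,5,2,3]
  | false, true,  false, true  => ![0,1,0,1]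
  | false, true,  true,  false => ![3,1,4,3]
  | false, true,  true,  true  => ![0,1,1,1]
  | true,  false, false, false => ![5,2,3,3]
  | true,  false, false, true  => ![4,3,3,1]
  | true,  false, true,  false => ![1,0,1,0]
  | true,  false, true,  true  => ![1,0,1,1]
  | true,  true,  false, false => ![1,4,3,3]
  | true,  true,  false, true  => ![1,1,0,1]
  | true,  true,  true,  false => ![1,1,1,0]
  | true,  true,  true,  true  => ![4,4,4,4]

def V (j : Fin 4) (s : Fin 4 → Bool) : ℤ := tbl (s 0) (s 1) (s 2) (s 3) j

def Rset : Bool → Bool → Bool → Bool → Bool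
  | false, false, false, true  => true
  | false, false, true,  false => true
  | false, false, true,  true  => true
  | false, true,  false, false => true
  | false, true,  true,  false => true
  | true,  false, false, false => true
  | true,  false, false, true  => true
  | true,  true,  false, false => true
  | _, _, _, _ => false

def InR (s : Fin 4 → Bool) : Prop := Rset (s 0) (s 1) (s 2) (s 3) = true

instance : DecidablePred InR := fun _ => by unfold InR; infer_instance

def memf (t : Bool) (p : Bool × Bool) : Bool := cond t p.2 p.1

lemma core_strict : ∀ (i : Fin 4) (s : Fin 4 → Bool) (t : Bool), t ≠ s i →
    V i (Function.update s i t) ≠ V i s := by decide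

lemma core_sub : ∀ f : Fin 4 → Bool × Bool, (∀ i, (f i).1 = true ∨ (f i).2 = true) →
    ∃ σ : Fin 4 → Bool, (∀ i, memf (σ i) (f i) = true) ∧
      ∀ i t, memf t (f i) = true → V i (Function.update σ i t) ≤ V i σ := by decide

lemma core_closed : ∀ σ : Fin 4 → Bool, InR σ → ∀ (i : Fin 4) (t : Bool),
    V i σ < V i (Function.update σ i t) → InR (Function.update σ i t) := by decide

lemma core_nonash : ∀ σ : Fin 4 → Bool, InR σ →
    ∃ i t, V i σ < V i (Function.update σ i t) := by decide

lemma core_start : InR (fun j => decide (j = 0)) := by decide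

end Stmt13Aux
namespace Stmt13Aux

def sig0 : Fin 4 → Bool := fun j => decide (j = 0)

lemma core_start' : InR sig0 := by decide

variable {n : ℕ}

def emb (hn : 4 ≤ n) (j : Fin 4) : Fin n := ⟨j.val, lt_of_lt_of_le j.isLt hn⟩

def pr (hn : 4 ≤ n) (s : Fin n → Bool) : Fin 4 → Bool := fun j => s (emb hn j)

noncomputable def bigU (hn : 4 ≤ n) (i : Fin n) (s : Fin n → Bool) : ℝ :=
  if h : (i : ℕ) < 4 then ((V ⟨(i : ℕ), h⟩ (pr hn s) : ℤ) : ℝ) else (if s i then 1 else 0)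

lemma bigU_lt (hn : 4 ≤ n) (i : Fin n) (h : (i : ℕ) < 4) (s : Fin n → Bool) :
    bigU hn i s = ((V ⟨(i : ℕ), h⟩ (pr hn s) : ℤ) : ℝ) := dif_pos h

lemma bigU_ge (hn : 4 ≤ n) (i : Fin n) (h : ¬ (i : ℕ) < 4) (s : Fin n → Bool) :
    bigU hn i s = (if s i then 1 else 0) := dif_neg h

lemma emb_mk (hn : 4 ≤ n) (i : Fin n) (h : (i : ℕ) < 4) :
    emb hn ⟨(i : ℕ), h⟩ = i := Fin.ext rfl

lemma pr_update_lt (hn : 4 ≤ n) (s : Fin n → Bool) (i : Fin n) (h : (i : ℕ) < 4) (t : Bool) :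
    pr hn (Function.update s i t) = Function.update (pr hn s) ⟨(i : ℕ), h⟩ t := by
  funext j
  by_cases hj : j = ⟨(i : ℕ), h⟩
  · subst hj
    show (Function.update s i t) (emb hn ⟨(i : ℕ), h⟩) = _
    rw [emb_mk hn i h, Function.update_self, Function.update_self]
  · have h2 : emb hn j ≠ i := by
      intro hc
      exact hj (Fin.ext (by simpa [emb] using congrArg Fin.val hc))
    show (Function.update s i t) (emb hn j) = _
    rw [Function.update_of_ne h2, Function.update_of_ne hj]
    rfl

lemma pr_update_ge (hn : 4 ≤ n) (s : Fin n → Bool) (i : Fin n) (h : ¬ (i : ℕ) < 4) (t : Bool) :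
    pr hn (Function.update s i t) = pr hn s := by
  funext j
  have h2 : emb hn j ≠ i := by
    intro hc
    exact h (by rw [← hc]; exact j.isLt)
  exact Function.update_of_ne h2 _ _

end Stmt13Aux

open Stmt13Aux in
theorem stmt13 : ∀ n : ℕ, 4 ≤ n → ∃ u : ∀ _ : Fin n, (∀ _ : Fin n, Bool) → ℝ,
    StrictGame u ∧ SubgameStable u ∧ ¬ WeaklyAcyclic u := by
  intro n hn
  classical
  refine ⟨bigU hn, ?_, ?_, ?_⟩
  · -- StrictGame
    intro i s t ht
    by_cases h : (i : ℕ) < 4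
    · rw [bigU_lt hn i h, bigU_lt hn i h, pr_update_lt hn s i h t]
      have hpi : pr hn s ⟨(i : ℕ), h⟩ = s i := congrArg s (emb_mk hn i h)
      have := core_strict ⟨(i : ℕ), h⟩ (pr hn s) t (by rw [hpi]; exact ht)
      exact_mod_cast this
    · rw [bigU_ge hn i h, bigU_ge hn i h, Function.update_self]
      cases t <;> cases h2 : s i <;> simp [h2] at ht ⊢ <;> norm_num
  · -- SubgameStable
    intro T hT
    set f : Fin 4 → Bool × Bool :=
      fun j => (decide (false ∈ T (emb hn j)), decide (true ∈ T (emb hn j))) with hfdef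
    have hf : ∀ j, (f j).1 = true ∨ (f j).2 = true := by
      intro j
      obtain ⟨x, hx⟩ := hT (emb hn j)
      cases x
      · exact Or.inl (decide_eq_true hx)
      · exact Or.inr (decide_eq_true hx)
    obtain ⟨σ, hσmem, hσnash⟩ := core_sub f hf
    have hmem : ∀ (j : Fin 4) (t : Bool), memf t (f j) = true ↔ t ∈ T (emb hn j) := by
      intro j t
      cases t <;> simp [memf, hfdef]
    set s : Fin n → Bool :=
      fun i => if h : (i : ℕ) < 4 then σ ⟨(i : ℕ), h⟩ else decide (true ∈ T i) with hsdef
    have hpi : pr hn s = σ := by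
      funext j
      show (if h : ((emb hn j : Fin n) : ℕ) < 4 then _ else _) = σ j
      rw [dif_pos (show ((emb hn j : Fin n) : ℕ) < 4 from j.isLt)]
      exact congrArg σ (Fin.ext rfl)
    refine ⟨s, ?_, ?_⟩
    · intro i
      by_cases h : (i : ℕ) < 4
      · have hs : s i = σ ⟨(i : ℕ), h⟩ := dif_pos h
        have h3 := (hmem ⟨(i : ℕ), h⟩ (σ ⟨(i : ℕ), h⟩)).mp (hσmem _)
        rw [emb_mk hn i h] at h3
        rw [hs]
        exact h3
      · have hs : s i = decide (true ∈ T i) := dif_neg h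
        by_cases hTt : true ∈ T i
        · rw [hs, decide_eq_true hTt]; exact hTt
        · have : s i = false := by rw [hs]; exact decide_eq_false hTt
          rw [this]
          obtain ⟨x, hx⟩ := hT i
          cases x
          · exact hx
          · exact absurd hx hTt
    · intro i t htT
      by_cases h : (i : ℕ) < 4
      · rw [bigU_lt hn i h, bigU_lt hn i h, pr_update_lt hn s i h t, hpi]
        have : memf t (f ⟨(i : ℕ), h⟩) = true := by
          rw [hmem, emb_mk hn i h]; exact htT
        exact_mod_cast hσnash ⟨(i : ℕ), h⟩ t this
      · rw [bigU_ge hn i h, bigU_ge hn i h, Function.update_self]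
        have hs : s i = decide (true ∈ T i) := dif_neg h
        by_cases hTt : true ∈ T i
        · rw [hs, decide_eq_true hTt]
          cases t <;> norm_num
        · have ht' : t = false := by
            cases t
            · rfl
            · exact absurd htT hTt
          have : s i = false := by rw [hs]; exact decide_eq_false hTt
          rw [ht', this]
  · -- not weakly acyclic
    intro hW
    set s₀ : Fin n → Bool :=
      fun i => if h : (i : ℕ) < 4 then sig0 ⟨(i : ℕ), h⟩ else true with hs₀def
    set Good : (Fin n → Bool) → Prop :=
      fun s => InR (pr hn s) ∧ ∀ i : Fin n, ¬ (i : ℕ) < 4 → s i = true with hGdef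
    have hpi0 : pr hn s₀ = sig0 := by
      funext j
      show (if h : ((emb hn j : Fin n) : ℕ) < 4 then _ else _) = sig0 j
      rw [dif_pos (show ((emb hn j : Fin n) : ℕ) < 4 from j.isLt)]
      exact congrArg sig0 (Fin.ext rfl)
    have hG0 : Good s₀ := by
      constructor
      · rw [hpi0]; exact core_start'
      · intro i h
        exact dif_neg h
    have hstep : ∀ s s', Good s → IsBetter (bigU hn) s s' → Good s' := by
      rintro s s' ⟨hR, hhi⟩ ⟨i, hupd, hne, hlt⟩
      by_cases h : (i : ℕ) < 4
      · have h1 : pr hn s' = Function.update (pr hn s) ⟨(i : ℕ), h⟩ (s' i) := by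
          have h1x := pr_update_lt hn s i h (s' i)
          rw [← hupd] at h1x
          exact h1x
        have hlt' : V ⟨(i : ℕ), h⟩ (pr hn s) <
            V ⟨(i : ℕ), h⟩ (Function.update (pr hn s) ⟨(i : ℕ), h⟩ (s' i)) := by
          rw [bigU_lt hn i h, bigU_lt hn i h, h1] at hlt
          exact_mod_cast hlt
        constructor
        · rw [h1]
          exact core_closed _ hR _ _ hlt'
        · intro j hj
          have hji : j ≠ i := by
            intro hc; exact hj (hc ▸ h)
          rw [hupd, Function.update_of_ne hji]
          exact hhi j hj
      · exfalso
        have hsi : s i = true := hhi i h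
        have h1 : bigU hn i s = 1 := by rw [bigU_ge hn i h, hsi]; norm_num
        have h2 : bigU hn i s' ≤ 1 := by
          rw [hupd, bigU_ge hn i h, Function.update_self]
          cases s' i <;> norm_num
        rw [h1] at hlt
        exact absurd hlt (not_lt.mpr h2)
    have hnonash : ∀ s, Good s → ¬ IsNash (bigU hn) s := by
      rintro s ⟨hR, -⟩ hN
      obtain ⟨j, t, hjt⟩ := core_nonash _ hR
      have hlt4 : ((emb hn j : Fin n) : ℕ) < 4 := j.isLt
      have hje : (⟨((emb hn j : Fin n) : ℕ), hlt4⟩ : Fin 4) = j := Fin.ext rfl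
      have hle := hN (emb hn j) t
      rw [bigU_lt hn _ hlt4, bigU_lt hn _ hlt4, pr_update_lt hn s (emb hn j) hlt4 t, hje]
        at hle
      exact absurd hle (not_le.mpr (by exact_mod_cast hjt))
    obtain ⟨ef, hpath, hNash⟩ := hW s₀
    have hGe : Good ef := by
      clear hNash
      induction hpath with
      | refl => exact hG0
      | tail _ hbc ih => exact hstep _ _ ih hbc
    exact hnonash ef hGe hNash
end

section
/- The 3×3 two-player game with row strategies {H,T,X} and column strategies {H,T,X} and payoffs (u_row,u_col): (H,H)=(2,0), (H,T)=(0,2), (H,X)=(0,0), (T,H)=(0,2), (T,T)=(2,0), (T,X)=(0,0), (X,H)=(0,0), (X,T)=(1,0), (X,X)=(3,3) is weakly acyclic under better response but not weakly acyclic under best response: starting from (H,H), no best-response improvement path reaches the unique pure Nash equilibrium (X,X), while a better-response improvement path from every profile does. -/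
/-- Row player's payoffs: strategies `0 = H`, `1 = T`, `2 = X`. -/
def A14 : Fin 3 → Fin 3 → ℝ := ![![2, 0, 0], ![0, 2, 0], ![0, 1, 3]]

/-- Column player's payoffs. -/
def B14 : Fin 3 → Fin 3 → ℝ := ![![0, 2, 0], ![2, 0, 0], ![0, 0, 3]]

def u14 : ∀ _ : Fin 2, (∀ _ : Fin 2, Fin 3) → ℝ :=
  fun i s => if i = 0 then A14 (s 0) (s 1) else B14 (s 0) (s 1)

/-!
Against `H` or `T` the opponent's best reply is always `H` or `T` (matching pennies earns 2,
while `X` earns at most 1 for the row player and 0 for the column player), so best-response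
dynamics started in the pennies block never leaves it and never reaches `(X, X)`. A merely
better reply can leave it: against `T`, switching from `H` to `X` raises the row player's
payoff from 0 to 1, after which the column player moves to `X`.
-/

section TwoPlayer

variable {α : Type*} {u : Fin 2 → (Fin 2 → α) → ℝ}

lemma eq_vec_fin_two (s : Fin 2 → α) : s = ![s 0, s 1] := by
  funext j; fin_cases j <;> rfl

lemma update_fin_two_zero (s : Fin 2 → α) (t : α) : Function.update s 0 t = ![t, s 1] := by
  funext j; fin_cases j <;> rfl

lemma update_fin_two_one (s : Fin 2 → α) (t : α) : Function.update s 1 t = ![s 0, t] := by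
  funext j; fin_cases j <;> rfl

lemma isBetter_vec_zero {a b c : α} (hca : c ≠ a) (h : u 0 ![a, b] < u 0 ![c, b]) :
    IsBetter u ![a, b] ![c, b] :=
  ⟨0, (update_fin_two_zero ![a, b] c).symm, hca, h⟩

lemma isBetter_vec_one {a b c : α} (hcb : c ≠ b) (h : u 1 ![a, b] < u 1 ![a, c]) :
    IsBetter u ![a, b] ![a, c] :=
  ⟨1, (update_fin_two_one ![a, b] c).symm, hcb, h⟩

lemma IsBest.fin_two {s s' : Fin 2 → α} (h : IsBest u s s') :
    (s' 1 = s 1 ∧ ∀ t, u 0 ![t, s 1] ≤ u 0 ![s' 0, s 1]) ∨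
      (s' 0 = s 0 ∧ ∀ t, u 1 ![s 0, t] ≤ u 1 ![s 0, s' 1]) := by
  obtain ⟨i, heq, -, -, hmax⟩ := h
  obtain rfl | rfl : i = 0 ∨ i = 1 := by omega
  · refine .inl ⟨by rw [heq]; exact Function.update_of_ne (by decide) _ _, fun t => ?_⟩
    rw [← update_fin_two_zero, ← update_fin_two_zero, ← heq]
    exact hmax t
  · refine .inr ⟨by rw [heq]; exact Function.update_of_ne (by decide) _ _, fun t => ?_⟩
    rw [← update_fin_two_one, ← update_fin_two_one, ← heq]
    exact hmax t

end TwoPlayer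

lemma IsBetter.not_isNash {n : ℕ} {S : Fin n → Type*} {u : ∀ i : Fin n, (∀ j, S j) → ℝ}
    {s s' : ∀ j, S j} (h : IsBetter u s s') : ¬ IsNash u s := by
  obtain ⟨i, heq, -, hlt⟩ := h
  intro hs
  have hdev := hs i (s' i)
  rw [← heq] at hdev
  exact hdev.not_gt hlt

@[simp] lemma u14_zero (a b : Fin 3) : u14 0 ![a, b] = A14 a b := rfl

@[simp] lemma u14_one (a b : Fin 3) : u14 1 ![a, b] = B14 a b := rfl

lemma isNash_u14_XX : IsNash u14 ![2, 2] := by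
  intro i t
  obtain rfl | rfl : i = 0 ∨ i = 1 := by omega
  · rw [update_fin_two_zero]
    fin_cases t <;> simp [A14]
  · rw [update_fin_two_one]
    fin_cases t <;> simp [B14]

lemma reflTransGen_isBetter_u14_XX (s : Fin 2 → Fin 3) :
    Relation.ReflTransGen (IsBetter u14) s ![2, 2] := by
  have hX_ : ∀ b, Relation.ReflTransGen (IsBetter u14) ![2, b] ![2, 2] := by
    intro b
    fin_cases b
    all_goals first
      | exact .refl
      | exact .single (isBetter_vec_one (by decide) (by simp [B14]))
  have h_X : ∀ a, Relation.ReflTransGen (IsBetter u14) ![a, 2] ![2, 2] := by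
    intro a
    fin_cases a
    all_goals first
      | exact .refl
      | exact .single (isBetter_vec_zero (by decide) (by simp [A14]))
  have hHT : Relation.ReflTransGen (IsBetter u14) ![0, 1] ![2, 2] :=
    .head (isBetter_vec_zero (by decide) (by simp [A14])) (hX_ 1)
  have hHH : Relation.ReflTransGen (IsBetter u14) ![0, 0] ![2, 2] :=
    .head (isBetter_vec_one (by decide) (by simp [B14])) hHT
  have hTH : Relation.ReflTransGen (IsBetter u14) ![1, 0] ![2, 2] :=
    .head (isBetter_vec_zero (by decide) (by simp [A14])) hHH
  have hTT : Relation.ReflTransGen (IsBetter u14) ![1, 1] ![2, 2] :=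
    .head (isBetter_vec_one (by decide) (by simp [B14])) hTH
  rw [eq_vec_fin_two s]
  generalize s 0 = a, s 1 = b
  fin_cases a <;> fin_cases b
  all_goals first
    | exact hHH | exact hHT | exact hTH | exact hTT | exact hX_ _ | exact h_X _

lemma isNash_u14_iff (s : Fin 2 → Fin 3) : IsNash u14 s ↔ s = ![2, 2] := by
  refine ⟨fun hs => ?_, fun h => h ▸ isNash_u14_XX⟩
  rcases Relation.ReflTransGen.cases_head_iff.mp (reflTransGen_isBetter_u14_XX s) with
    h | ⟨s', hstep, -⟩
  · exact h
  · exact absurd hs hstep.not_isNash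

lemma IsBest.u14_avoids_X {s s' : Fin 2 → Fin 3} (h : IsBest u14 s s')
    (h0 : s 0 ≠ 2) (h1 : s 1 ≠ 2) : s' 0 ≠ 2 ∧ s' 1 ≠ 2 := by
  rcases h.fin_two with ⟨hs1, hmax⟩ | ⟨hs0, hmax⟩
  · refine ⟨fun hX => ?_, hs1 ▸ h1⟩
    have hmatch := hmax (s 1)
    rw [hX] at hmatch
    obtain h | h : s 1 = 0 ∨ s 1 = 1 := by omega
    all_goals rw [h] at hmatch; simp [A14] at hmatch <;> norm_num at hmatch
  · refine ⟨hs0 ▸ h0, fun hX => ?_⟩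
    have hmismatch := hmax (1 - s 0)
    rw [hX] at hmismatch
    obtain h | h : s 0 = 0 ∨ s 0 = 1 := by omega
    all_goals rw [h] at hmismatch; simp [B14] at hmismatch; norm_num at hmismatch

lemma reflTransGen_isBest_u14_avoids_X {e : Fin 2 → Fin 3}
    (h : Relation.ReflTransGen (IsBest u14) ![0, 0] e) : e 0 ≠ 2 ∧ e 1 ≠ 2 := by
  induction h with
  | refl => decide
  | tail _ hstep ih => exact hstep.u14_avoids_X ih.1 ih.2

theorem stmt14 :
    WeaklyAcyclic u14 ∧
    (∀ s, IsNash u14 s ↔ s = ![2, 2]) ∧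
    ¬ ∃ e, Relation.ReflTransGen (IsBest u14) ![0, 0] e ∧ IsNash u14 e := by
  refine ⟨fun s => ⟨_, reflTransGen_isBetter_u14_XX s, isNash_u14_XX⟩, isNash_u14_iff, ?_⟩
  rintro ⟨e, hpath, hnash⟩
  have hX : e 0 = 2 := by rw [(isNash_u14_iff e).mp hnash]; rfl
  exact (reflTransGen_isBest_u14_avoids_X hpath).1 hX
end

section
/- Let Γ be a uniquely subgame stable game, let s be any profile, and let Γ'' be the subgame spanned by BR_Γ(s). If the unique pure Nash equilibrium s* of Γ does not lie in Γ'', then the unique pure Nash equilibrium of Γ'' is not a pure Nash equilibrium of Γ and hence has an outgoing best-response edge in Γ. -/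
theorem stmt18 {n : ℕ} {S : Fin n → Type*} [∀ i, Fintype (S i)] [∀ i, Nonempty (S i)]
    (u : ∀ i : Fin n, (∀ j, S j) → ℝ) (hUSS : USS u)
    (s sstar : ∀ j, S j) (hstar : IsNash u sstar)
    (hnot : ¬ InSub (SpanBR u s) sstar) :
    ∀ e, IsNashOn u (SpanBR u s) e → ¬ IsNash u e ∧ ∃ e', IsBest u e e' := by
  intro e he
  have hne : ¬ IsNash u e := by
    intro hN
    have h1 : IsNashOn u (fun i => (Set.univ : Set (S i))) e :=
      ⟨fun i => trivial, fun i t _ => hN i t⟩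
    have h2 : IsNashOn u (fun i => (Set.univ : Set (S i))) sstar :=
      ⟨fun i => trivial, fun i t _ => hstar i t⟩
    obtain ⟨w, hw, huniq⟩ := hUSS (fun i => Set.univ)
      (fun i => ⟨Classical.arbitrary _, trivial⟩)
    have heq : e = sstar := (huniq e h1).trans (huniq sstar h2).symm
    exact hnot (heq ▸ he.1)
  refine ⟨hne, ?_⟩
  simp only [IsNash, not_forall, not_le] at hne
  obtain ⟨i, t, ht⟩ := hne
  obtain ⟨tm, htm⟩ := Finite.exists_max (fun x : S i => u i (Function.update e i x))
  refine ⟨Function.update e i tm, i, ?_, ?_, ?_, ?_⟩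
  · simp
  · intro h
    simp only [Function.update_self] at h
    have hlt : u i e < u i (Function.update e i tm) := lt_of_lt_of_le ht (htm t)
    rw [h, Function.update_eq_self] at hlt
    exact lt_irrefl _ hlt
  · exact lt_of_lt_of_le ht (htm t)
  · intro x
    simpa using htm x
end
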